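/- arXiv:1402.4978 — 4 statements merged into one kernel-verified Lean document; each statement's English description precedes it below -/
import Mathlib

section
/- The commuting graph of the alternating group A_5 is a disjoint union of complete graphs K_4 (from subgroups of order 5 minus identity), K_2 (from subgroups of order 3 minus identity), and K_3 (from Klein four-subgroups minus identity), and hence is planar. -/
open SimpleGraph

/-- The commuting graph of a group `G`: vertices are the non-central elements,
two distinct vertices are adjacent iff they commute. -/
def commGraph (G : Type*) [Group G] : SimpleGraph {x : G // x ∉ Subgroup.center G} where
  Adj x y := x ≠ y ∧ (x : G) * y = (y : G) * x
  symm := ⟨fun _ _ h => ⟨h.1.symm, h.2.symm⟩⟩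
  loopless := ⟨fun _ h => h.1 rfl⟩

/-- A disjoint union of complete graphs, with `n` components of sizes `size 0, …, size (n-1)`. -/
def cliquesGraph {n : ℕ} (size : Fin n → ℕ) : SimpleGraph (Σ i, Fin (size i)) where
  Adj x y := x ≠ y ∧ x.1 = y.1
  symm := ⟨fun _ _ h => ⟨h.1.symm, h.2.symm⟩⟩
  loopless := ⟨fun _ h => h.1 rfl⟩

/-- A rotation system (combinatorial orientable embedding) of a graph: a permutation of
the darts preserving tails and acting with a single cycle on the darts at each vertex. -/
structure RotationSystem {V : Type*} (Γ : SimpleGraph V) where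
  rot : Equiv.Perm Γ.Dart
  tail_eq : ∀ d, (rot d).toProd.1 = d.toProd.1
  cyclic : ∀ d e : Γ.Dart, d.toProd.1 = e.toProd.1 → ∃ k : ℕ, (rot ^ k) d = e

/-- The number of faces of the embedding determined by a rotation system: the number of
orbits of the face-tracing map `d ↦ rot d.symm`, plus one face for each isolated vertex. -/
noncomputable def RotationSystem.numFaces {V : Type*} {Γ : SimpleGraph V}
    (R : RotationSystem Γ) : ℕ :=
  Nat.card (Quotient (Relation.EqvGen.setoid (fun d e : Γ.Dart => R.rot d.symm = e)))
    + Nat.card {v : V // ∀ w, ¬ Γ.Adj v w}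

/-- The (orientable) genus of a graph: the least `g` such that some rotation system
satisfies the Euler formula bound `E + 2c ≤ V + F + 2g`
(i.e. `V - E + F = 2c - 2·(sum of component genera)` with total component genus `≤ g`). -/
noncomputable def genus {V : Type*} (Γ : SimpleGraph V) : ℕ :=
  sInf {g : ℕ | ∃ R : RotationSystem Γ,
    (Nat.card Γ.edgeSet : ℤ) + 2 * Nat.card Γ.ConnectedComponent
      ≤ Nat.card V + R.numFaces + 2 * g}

/-- A graph is planar iff it has genus `0`. -/
def IsPlanar {V : Type*} (Γ : SimpleGraph V) : Prop := genus Γ = 0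

/-
Since the centre of A₅ is trivial, the vertices are the 59 non-identity elements, and every
centraliser of one of them is cyclic of order 5 or 3 or a Klein four-group. These 21 subgroups
partition the non-identity elements and two non-identity elements commute iff they lie in the
same one, so the commuting graph is 6 K₄ + 10 K₂ + 5 K₃, checked on an explicit labelling.
Planarity is witnessed by an explicit rotation system: the graph has 59 vertices, 61 edges and
21 components, and the embedding has at least 44 faces (4 per K₄, 1 per K₂, 2 per K₃), so the
Euler bound `E + 2c ≤ V + F` holds with genus 0. Genus is transported along graph isomorphisms.
-/

namespace SimpleGraph

variable {V V' : Type*} {Γ : SimpleGraph V} {Γ' : SimpleGraph V'}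

protected def Iso.mapDart (φ : Γ ≃g Γ') : Γ.Dart ≃ Γ'.Dart where
  toFun := φ.toHom.mapDart
  invFun := φ.symm.toHom.mapDart
  left_inv d := by ext <;> simp
  right_inv d := by ext <;> simp

end SimpleGraph

theorem Relation.EqvGen.map {α β : Type*} {r : α → α → Prop} {s : β → β → Prop}
    (f : α → β) (h : ∀ a b, r a b → s (f a) (f b)) {a b : α} (hab : EqvGen r a b) :
    EqvGen s (f a) (f b) := by
  induction hab with
  | rel x y hxy => exact .rel _ _ (h x y hxy)
  | refl => exact .refl _
  | symm x y _ ih => exact .symm _ _ ih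
  | trans x y z _ _ ihxy ihyz => exact .trans _ _ _ ihxy ihyz

theorem Relation.eqvGen_congr_iff {α β : Type*} {r : α → α → Prop} {s : β → β → Prop}
    (e : α ≃ β) (h : ∀ a b, r a b ↔ s (e a) (e b)) {a b : α} :
    EqvGen r a b ↔ EqvGen s (e a) (e b) := by
  refine ⟨.map e fun x y => (h x y).1, fun hs => ?_⟩
  simpa using hs.map e.symm fun x y hxy => by simpa [h] using hxy

namespace RotationSystem

variable {V V' : Type*} {Γ : SimpleGraph V} {Γ' : SimpleGraph V'}

def map (φ : Γ ≃g Γ') (R : RotationSystem Γ) : RotationSystem Γ' where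
  rot := φ.mapDart.permCongrHom R.rot
  tail_eq d := by
    simp [Equiv.permCongrHom_coe, Equiv.permCongr_apply, Iso.mapDart, R.tail_eq]
  cyclic d e h := by
    obtain ⟨k, hk⟩ := R.cyclic (φ.mapDart.symm d) (φ.mapDart.symm e) (by simp [Iso.mapDart, h])
    refine ⟨k, ?_⟩
    rw [← map_pow, Equiv.permCongrHom_coe, Equiv.permCongr_apply, hk, Equiv.apply_symm_apply]

theorem numFaces_map (φ : Γ ≃g Γ') (R : RotationSystem Γ) :
    (R.map φ).numFaces = R.numFaces := by
  have faces : Quotient (Relation.EqvGen.setoid fun d e : Γ'.Dart => (R.map φ).rot d.symm = e) ≃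
      Quotient (Relation.EqvGen.setoid fun d e : Γ.Dart => R.rot d.symm = e) :=
    Quotient.congr φ.mapDart.symm fun _ _ => Relation.eqvGen_congr_iff _ fun d e => by
      show φ.mapDart (R.rot (φ.mapDart.symm d).symm) = e ↔ _
      exact φ.mapDart.eq_symm_apply.symm
  have isolated : {v : V // ∀ w, ¬ Γ.Adj v w} ≃ {v : V' // ∀ w, ¬ Γ'.Adj v w} :=
    φ.toEquiv.subtypeEquiv fun v => φ.toEquiv.forall_congr fun {_} => φ.map_adj_iff.not.symm
  rw [numFaces, numFaces, Nat.card_congr faces, Nat.card_congr isolated]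

theorem card_range_le_numFaces [Finite Γ.Dart] (R : RotationSystem Γ) {β : Type*}
    (f : Γ.Dart → β) (hf : ∀ d, f (R.rot d.symm) = f d) :
    Nat.card (Set.range f) ≤ R.numFaces := by
  let q : Quotient (Relation.EqvGen.setoid fun d e : Γ.Dart => R.rot d.symm = e) → Set.range f :=
    Quotient.lift (fun d => ⟨f d, d, rfl⟩) fun a b hab => Subtype.ext <|
      Equivalence.eqvGen_iff eq_equivalence |>.mp <| hab.map f fun d e hde => hde ▸ (hf d).symm
  have hq : Function.Surjective q := by
    rintro ⟨_, d, rfl⟩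
    exact ⟨⟦d⟧, rfl⟩
  exact (Nat.card_le_card_of_surjective q hq).trans (Nat.le_add_right _ _)

end RotationSystem

theorem genus_congr {V V' : Type*} {Γ : SimpleGraph V} {Γ' : SimpleGraph V'} (φ : Γ ≃g Γ') :
    genus Γ = genus Γ' := by
  have hV : Nat.card V = Nat.card V' := Nat.card_congr φ.toEquiv
  have hE : Nat.card Γ.edgeSet = Nat.card Γ'.edgeSet := Nat.card_congr φ.mapEdgeSet
  have hC : Nat.card Γ.ConnectedComponent = Nat.card Γ'.ConnectedComponent :=
    Nat.card_congr φ.connectedComponentEquiv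
  unfold genus
  congr 1
  ext g
  constructor
  · rintro ⟨R, hR⟩
    exact ⟨R.map φ, by rwa [R.numFaces_map, ← hV, ← hE, ← hC]⟩
  · rintro ⟨R, hR⟩
    exact ⟨R.map φ.symm, by rwa [R.numFaces_map, hV, hE, hC]⟩

theorem isPlanar_of_rotationSystem {V : Type*} {Γ : SimpleGraph V} (R : RotationSystem Γ)
    (h : (Nat.card Γ.edgeSet : ℤ) + 2 * Nat.card Γ.ConnectedComponent ≤ Nat.card V + R.numFaces) :
    IsPlanar Γ :=
  Nat.sInf_eq_zero.mpr <| .inl ⟨R, by simpa using h⟩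

section cliquesGraph

variable {n : ℕ} (size : Fin n → ℕ)

instance : DecidableRel (cliquesGraph size).Adj := fun x y =>
  decidable_of_iff (x ≠ y ∧ x.1 = y.1) Iff.rfl

theorem cliquesGraph_neighborFinset (v : Σ i, Fin (size i)) :
    (cliquesGraph size).neighborFinset v =
      (Finset.univ.erase v.2).map (Function.Embedding.sigmaMk v.1) := by
  obtain ⟨i, a⟩ := v
  ext ⟨j, b⟩
  rw [mem_neighborFinset]
  show _ ∧ i = j ↔ _
  simp only [Finset.mem_map, Finset.mem_erase, Finset.mem_univ, and_true,
    Function.Embedding.sigmaMk_apply]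
  constructor
  · rintro ⟨hne, rfl⟩
    exact ⟨b, fun h => hne (h ▸ rfl), rfl⟩
  · rintro ⟨c, hc, h⟩
    cases h
    exact ⟨fun h => hc (eq_of_heq (Sigma.mk.inj h).2).symm, rfl⟩

theorem cliquesGraph_degree (v : Σ i, Fin (size i)) :
    (cliquesGraph size).degree v = size v.1 - 1 := by
  rw [← card_neighborFinset_eq_degree, cliquesGraph_neighborFinset, Finset.card_map,
    Finset.card_erase_of_mem (Finset.mem_univ _), Finset.card_univ, Fintype.card_fin]

theorem two_mul_card_edgeFinset_cliquesGraph :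
    2 * (cliquesGraph size).edgeFinset.card = ∑ i, size i * (size i - 1) := by
  rw [← sum_degrees_eq_twice_card_edges, Fintype.sum_sigma]
  simp [cliquesGraph_degree]

theorem cliquesGraph_reachable_iff {v w : Σ i, Fin (size i)} :
    (cliquesGraph size).Reachable v w ↔ v.1 = w.1 := by
  constructor
  · rintro ⟨p⟩
    induction p with
    | nil => rfl
    | cons h _ ih => exact h.2.trans ih
  · intro h
    by_cases hvw : v = w
    · exact hvw ▸ .refl v
    · exact Adj.reachable ⟨hvw, h⟩

theorem card_connectedComponent_cliquesGraph (hsize : ∀ i, 0 < size i) :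
    Nat.card (cliquesGraph size).ConnectedComponent = n := by
  let fst : (cliquesGraph size).ConnectedComponent → Fin n :=
    ConnectedComponent.lift Sigma.fst fun _ _ p _ =>
      (cliquesGraph_reachable_iff size).mp p.reachable
  have hinj : Function.Injective fst :=
    ConnectedComponent.ind₂ fun _ _ h =>
      ConnectedComponent.sound ((cliquesGraph_reachable_iff size).mpr h)
  have hsurj : Function.Surjective fst := fun i =>
    ⟨connectedComponentMk _ ⟨i, ⟨0, hsize i⟩⟩, rfl⟩
  rw [Nat.card_eq_of_bijective fst ⟨hinj, hsurj⟩, Nat.card_eq_fintype_card, Fintype.card_fin]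

def cliqueNext {m : ℕ} (s : ℕ) (a : Fin m) (b : ℕ) : Fin m :=
  if (b + s) % m = a then ⟨(b + 2 * s) % m, Nat.mod_lt _ a.pos⟩
  else ⟨(b + s) % m, Nat.mod_lt _ a.pos⟩

/-- Turning around even vertices in one sense and around odd ones in the other gives, on `K₄`,
the rotation system of its planar drawing. The `else` branch is never taken; it only makes the
definition total. -/
def cliquesRot (d : (cliquesGraph size).Dart) : (cliquesGraph size).Dart :=
  let v := d.fst
  let w : Σ i, Fin (size i) :=
    ⟨v.1, cliqueNext (if v.2.val % 2 = 0 then size v.1 - 1 else 1) v.2 d.snd.2⟩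
  if h : v ≠ w then ⟨(v, w), h, rfl⟩ else d

theorem cliquesRot_fst (d : (cliquesGraph size).Dart) : (cliquesRot size d).fst = d.fst := by
  unfold cliquesRot
  dsimp only
  split_ifs <;> rfl

-- Every face of these embeddings has at most three darts, so this is the face through `d`.
def cliquesFace (d : (cliquesGraph size).Dart) : Finset (cliquesGraph size).Dart :=
  {d, cliquesRot size d.symm, cliquesRot size (cliquesRot size d.symm).symm}

end cliquesGraph

section commGraph

variable {G V : Type*} [Group G]

def commGraphIsoOfCenterEqBot (hG : Subgroup.center G = ⊥) {Γ : SimpleGraph V}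
    (e : V ≃ {x : G // x ≠ 1}) (hadj : ∀ v w, Γ.Adj v w ↔ v ≠ w ∧ (e v : G) * e w = e w * e v) :
    Γ ≃g commGraph G where
  toEquiv := e.trans (Equiv.subtypeEquivRight fun x => by rw [hG, Subgroup.mem_bot])
  map_rel_iff' {v w} := by
    rw [hadj]
    simp [commGraph]

end commGraph

set_option maxRecDepth 100000

abbrev a5Sizes : Fin 21 → ℕ := fun i => if (i : ℕ) < 6 then 4 else if (i : ℕ) < 16 then 2 else 3

section A5

open Equiv

def fiveCycles : List (Perm (Fin 5)) :=
  [c[0, 1, 2, 3, 4], c[0, 1, 2, 4, 3], c[0, 1, 3, 2, 4], c[0, 1, 3, 4, 2], c[0, 1, 4, 2, 3],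
    c[0, 1, 4, 3, 2]]

def threeCycles : List (Perm (Fin 5)) :=
  [c[0, 1, 2], c[0, 1, 3], c[0, 1, 4], c[0, 2, 3], c[0, 2, 4], c[0, 3, 4], c[1, 2, 3], c[1, 2, 4],
    c[1, 3, 4], c[2, 3, 4]]

def kleinFourInvolutions : List (List (Perm (Fin 5))) :=
  [[c[1, 2] * c[3, 4], c[1, 3] * c[2, 4], c[1, 4] * c[2, 3]],
   [c[0, 2] * c[3, 4], c[0, 3] * c[2, 4], c[0, 4] * c[2, 3]],
   [c[0, 1] * c[3, 4], c[0, 3] * c[1, 4], c[0, 4] * c[1, 3]],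
   [c[0, 1] * c[2, 4], c[0, 2] * c[1, 4], c[0, 4] * c[1, 2]],
   [c[0, 1] * c[2, 3], c[0, 2] * c[1, 3], c[0, 3] * c[1, 2]]]

/-- Clique `i` of `cliquesGraph a5Sizes` is labelled by the non-identity elements of the `i`-th
subgroup of order 5 (`i < 6`), of order 3 (`6 ≤ i < 16`) or Klein four-subgroup. -/
def a5Label (v : Σ i, Fin (a5Sizes i)) : Perm (Fin 5) :=
  if v.1 < 6 then (fiveCycles.getD v.1 1) ^ (v.2.val + 1)
  else if v.1 < 16 then (threeCycles.getD (v.1 - 6) 1) ^ (v.2.val + 1)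
  else (kleinFourInvolutions.getD (v.1 - 16) []).getD v.2 1

theorem a5Label_sign : ∀ v, Perm.sign (a5Label v) = 1 := by decide

theorem a5Label_injective : Function.Injective a5Label := by decide

theorem a5Label_ne_one : ∀ v, a5Label v ≠ 1 := by decide

theorem exists_a5Label_eq : ∀ x : Perm (Fin 5), Perm.sign x = 1 → x ≠ 1 → ∃ v, a5Label v = x := by
  decide

theorem a5Label_mul_comm_iff :
    ∀ v w, a5Label v * a5Label w = a5Label w * a5Label v ↔ v.1 = w.1 := by
  decide

noncomputable def a5LabelEquiv : (Σ i, Fin (a5Sizes i)) ≃ {x : alternatingGroup (Fin 5) // x ≠ 1} :=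
  Equiv.ofBijective
    (fun v => ⟨⟨a5Label v, Perm.mem_alternatingGroup.mpr (a5Label_sign v)⟩,
      fun h => a5Label_ne_one v (congrArg Subtype.val h)⟩)
    ⟨fun v w h => a5Label_injective (congrArg (fun x => x.val.val) h), by
      rintro ⟨⟨x, hx⟩, hx1⟩
      obtain ⟨v, rfl⟩ := exists_a5Label_eq x (Perm.mem_alternatingGroup.mp hx)
        fun h => hx1 (Subtype.ext h)
      exact ⟨v, rfl⟩⟩

noncomputable def cliquesGraphIsoCommGraphA5 :
    cliquesGraph a5Sizes ≃g commGraph (alternatingGroup (Fin 5)) :=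
  commGraphIsoOfCenterEqBot (alternatingGroup.center_eq_bot (by simp)) a5LabelEquiv
    fun v w => and_congr_right fun _ => by
      rw [← a5Label_mul_comm_iff]
      rw [Subtype.ext_iff]
      exact Iff.rfl

end A5

theorem cliquesRot_a5Sizes_injective : Function.Injective (cliquesRot a5Sizes) := by decide

theorem cliquesRot_a5Sizes_cycle : ∀ d e : (cliquesGraph a5Sizes).Dart, d.fst = e.fst →
    e = d ∨ e = cliquesRot a5Sizes d ∨ e = cliquesRot a5Sizes (cliquesRot a5Sizes d) := by
  decide

theorem cliquesFace_a5Sizes_rot :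
    ∀ d, cliquesFace a5Sizes (cliquesRot a5Sizes d.symm) = cliquesFace a5Sizes d := by
  decide

theorem card_image_cliquesFace_a5Sizes : (Finset.univ.image (cliquesFace a5Sizes)).card = 44 := by
  decide

noncomputable def a5SizesRotationSystem : RotationSystem (cliquesGraph a5Sizes) where
  rot := Equiv.ofBijective _ (Finite.injective_iff_bijective.mp cliquesRot_a5Sizes_injective)
  tail_eq := cliquesRot_fst a5Sizes
  cyclic d e h := by
    rcases cliquesRot_a5Sizes_cycle d e h with rfl | rfl | rfl
    exacts [⟨0, rfl⟩, ⟨1, rfl⟩, ⟨2, rfl⟩]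

theorem isPlanar_cliquesGraph_a5Sizes : IsPlanar (cliquesGraph a5Sizes) := by
  refine isPlanar_of_rotationSystem a5SizesRotationSystem ?_
  have hV : Nat.card (Σ i, Fin (a5Sizes i)) = 59 := by
    rw [Nat.card_eq_fintype_card]
    decide
  have hE : Nat.card (cliquesGraph a5Sizes).edgeSet = 61 := by
    have h2E := two_mul_card_edgeFinset_cliquesGraph a5Sizes
    have hsum : ∑ i, a5Sizes i * (a5Sizes i - 1) = 122 := by decide
    rw [Nat.card_eq_fintype_card, card_edgeSet]
    omega
  have hC := card_connectedComponent_cliquesGraph a5Sizes (by decide)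
  have hF : 44 ≤ a5SizesRotationSystem.numFaces := by
    rw [← card_image_cliquesFace_a5Sizes, ← Set.toFinset_range, ← Nat.card_eq_card_toFinset]
    exact a5SizesRotationSystem.card_range_le_numFaces _ cliquesFace_a5Sizes_rot
  rw [hV, hE, hC]
  push_cast
  omega

/-- The commuting graph of `A₅` is a disjoint union of complete graphs: six copies of
`K₄` (from the subgroups of order `5`), ten copies of `K₂` (from the subgroups of order
`3`) and five copies of `K₃` (from the Klein four-subgroups); hence it is planar. -/
theorem commGraph_A5 :
    Nonempty (commGraph (alternatingGroup (Fin 5)) ≃g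
        cliquesGraph (fun i : Fin 21 =>
          if (i : ℕ) < 6 then 4 else if (i : ℕ) < 16 then 2 else 3)) ∧
      IsPlanar (commGraph (alternatingGroup (Fin 5))) :=
  ⟨⟨cliquesGraphIsoCommGraphA5.symm⟩,
    (genus_congr cliquesGraphIsoCommGraphA5).symm.trans isPlanar_cliquesGraph_a5Sizes⟩
end

section
/- Let G be a finite non-abelian group. If the non-commuting graph of G has genus at most 1, then k(G) ≥ |G| − 5, where k(G) is the number of conjugacy classes of G. -/
open SimpleGraph

/-- The non-commuting graph of a group `G`: vertices are the non-central elements,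
two vertices are adjacent iff they do not commute. -/
def nonCommGraph (G : Type*) [Group G] : SimpleGraph {x : G // x ∉ Subgroup.center G} where
  Adj x y := (x : G) * y ≠ (y : G) * x
  symm := ⟨fun _ _ h he => h he.symm⟩
  loopless := ⟨fun _ h => h rfl⟩

/-!
Counting commuting pairs gives `2|E| + k(G)|G| = |G|²` for the edge set `E` of the
non-commuting graph. A non-central `x` is adjacent to both `y` and `xy` whenever `y` does not
commute with `x`, so every vertex has degree at least two; hence every face of an embedding has
length at least three, `3F ≤ 2|E|`, and Euler's formula on a surface of genus at most one yields
`|E| ≤ 3|V| < 3|G|`. Together, `|G|² < (k(G) + 6)|G|`.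
-/

namespace Equiv.Perm

theorem exists_fiberwise_sameCycle {α β : Type*} [Finite α] (f : α → β) :
    ∃ π : Perm α, (∀ a, f (π a) = f a) ∧ ∀ a b, f a = f b → π.SameCycle a b := by
  classical
  have : Fintype α := Fintype.ofFinite α
  choose σ hσ using fun b => (Finset.univ : Finset {a // f a = b}).exists_cycleOn
  refine ⟨(sigmaFiberEquiv f).permCongrHom (sigmaCongrRightHom _ σ),
    fun a => (σ (f a) ⟨a, rfl⟩).2, fun a b hab => ?_⟩
  obtain ⟨i, hi⟩ := (hσ (f a)).1.2 (Finset.mem_coe.2 (Finset.mem_univ ⟨a, rfl⟩))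
    (Finset.mem_coe.2 (Finset.mem_univ ⟨b, hab.symm⟩))
  refine ⟨i, ?_⟩
  rw [← map_zpow, ← map_zpow]
  exact congrArg Subtype.val hi

end Equiv.Perm

open Finset in
theorem three_mul_card_quotient_eqvGen_le {α : Type*} [Finite α] (f : α → α)
    (h₁ : ∀ a, f a ≠ a) (h₂ : ∀ a, f (f a) ≠ a) :
    3 * Nat.card (Quotient (Relation.EqvGen.setoid fun a b : α => f a = b)) ≤ Nat.card α := by
  classical
  have := Fintype.ofFinite α
  set r := Relation.EqvGen.setoid fun a b : α => f a = b
  have step (a : α) : Quotient.mk r (f a) = Quotient.mk r a :=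
    (Quotient.sound (Relation.EqvGen.rel a (f a) rfl)).symm
  rw [Nat.card_eq_fintype_card, Nat.card_eq_fintype_card, ← card_univ, ← card_univ]
  refine mul_card_image_le_card_of_maps_to (f := Quotient.mk r) (fun _ _ => mem_univ _) 3 ?_
  rintro q -
  induction q using Quotient.inductionOn with | h a => ?_
  calc 3 = #{a, f a, f (f a)} :=
        (card_eq_three.2 ⟨a, f a, f (f a), (h₁ a).symm, (h₂ a).symm, (h₁ (f a)).symm, rfl⟩).symm
    _ ≤ _ := card_le_card fun b hb => by
        simp only [mem_insert, mem_singleton] at hb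
        rcases hb with rfl | rfl | rfl <;> simp [step]

namespace SimpleGraph

variable {V : Type*} {Γ : SimpleGraph V}

theorem card_dart_eq_two_mul_card_edgeSet [Finite V] :
    Nat.card Γ.Dart = 2 * Nat.card Γ.edgeSet := by
  classical
  have := Fintype.ofFinite V
  rw [Nat.card_eq_fintype_card, Nat.card_eq_fintype_card, dart_card_eq_twice_card_edges,
    edgeFinset_card]

end SimpleGraph

namespace RotationSystem

variable {V : Type*} {Γ : SimpleGraph V}

def faceMap (R : RotationSystem Γ) (d : Γ.Dart) : Γ.Dart := R.rot d.symm

theorem rot_ne_self (R : RotationSystem Γ) {d : Γ.Dart} (hd : (Γ.neighborSet d.fst).Nontrivial) :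
    R.rot d ≠ d := by
  intro hfix
  obtain ⟨w, hw, hne⟩ := hd.exists_ne d.snd
  obtain ⟨k, hk⟩ := R.cyclic d ⟨(d.fst, w), hw⟩ rfl
  rw [Equiv.Perm.pow_apply_eq_self_of_apply_eq_self hfix] at hk
  exact hne (congrArg (·.snd) hk).symm

theorem fst_faceMap (R : RotationSystem Γ) (d : Γ.Dart) : (R.faceMap d).fst = d.snd :=
  R.tail_eq d.symm

theorem faceMap_ne_self (R : RotationSystem Γ) (d : Γ.Dart) : R.faceMap d ≠ d := fun h =>
  d.adj.ne (by rw [← R.fst_faceMap, h])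

theorem faceMap_faceMap_ne_self (R : RotationSystem Γ) (hΓ : ∀ v, (Γ.neighborSet v).Nontrivial)
    (d : Γ.Dart) : R.faceMap (R.faceMap d) ≠ d := by
  intro h
  have hsnd : (R.faceMap d).snd = d.fst := by rw [← R.fst_faceMap, h]
  -- a face of length two would traverse `d` and then `d.symm`, forcing `rot` to fix `d.symm`
  have hsymm : R.faceMap d = d.symm := Dart.ext _ _ (Prod.ext (R.fst_faceMap d) hsnd)
  exact R.rot_ne_self (hΓ _) hsymm

theorem three_mul_numFaces_le [Finite V] (R : RotationSystem Γ)
    (hΓ : ∀ v, (Γ.neighborSet v).Nontrivial) :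
    3 * R.numFaces ≤ 2 * Nat.card Γ.edgeSet := by
  have hiso : IsEmpty {v : V // ∀ w, ¬ Γ.Adj v w} :=
    ⟨fun ⟨v, hv⟩ => let ⟨w, hw⟩ := (hΓ v).nonempty; hv w hw⟩
  have := Finite.of_injective _ (Dart.toProd_injective (G := Γ))
  rw [numFaces, Nat.card_of_isEmpty (α := {v : V // ∀ w, ¬ Γ.Adj v w}), add_zero,
    ← card_dart_eq_two_mul_card_edgeSet]
  exact three_mul_card_quotient_eqvGen_le R.faceMap R.faceMap_ne_self
    (R.faceMap_faceMap_ne_self hΓ)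

end RotationSystem

namespace SimpleGraph

variable {V : Type*} {Γ : SimpleGraph V}

theorem nonempty_rotationSystem [Finite V] : Nonempty (RotationSystem Γ) := by
  have := Finite.of_injective _ (Dart.toProd_injective (G := Γ))
  obtain ⟨π, hπ, hcyc⟩ := Equiv.Perm.exists_fiberwise_sameCycle fun d : Γ.Dart => d.fst
  exact ⟨⟨π, hπ, fun d e hde => (hcyc d e hde).exists_nat_pow_eq⟩⟩

theorem exists_rotationSystem_euler_genus [Finite V] : ∃ R : RotationSystem Γ,
    (Nat.card Γ.edgeSet : ℤ) + 2 * Nat.card Γ.ConnectedComponent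
      ≤ Nat.card V + R.numFaces + 2 * genus Γ := by
  obtain ⟨R⟩ := nonempty_rotationSystem (Γ := Γ)
  have hne : {g : ℕ | ∃ R : RotationSystem Γ,
      (Nat.card Γ.edgeSet : ℤ) + 2 * Nat.card Γ.ConnectedComponent
        ≤ Nat.card V + R.numFaces + 2 * g}.Nonempty :=
    ⟨Nat.card Γ.edgeSet + Nat.card Γ.ConnectedComponent, R, by push_cast; omega⟩
  exact Nat.sInf_mem hne

theorem card_edgeSet_le_three_mul_card_of_genus_le_one [Finite V]
    (hΓ : ∀ v, (Γ.neighborSet v).Nontrivial) (hg : genus Γ ≤ 1) :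
    Nat.card Γ.edgeSet ≤ 3 * Nat.card V := by
  rcases isEmpty_or_nonempty V with hV | hV
  · simp
  obtain ⟨R, hR⟩ := exists_rotationSystem_euler_genus (Γ := Γ)
  have hc : 0 < Nat.card Γ.ConnectedComponent := Nat.card_pos
  have hF := R.three_mul_numFaces_le hΓ
  omega

end SimpleGraph

theorem Subgroup.notMem_center_of_mul_ne {G : Type*} [Group G] {a b : G} (h : a * b ≠ b * a) :
    a ∉ Subgroup.center G :=
  fun ha => h ((Subgroup.mem_center_iff.mp ha) b).symm

namespace nonCommGraph

open Subgroup

variable {G : Type*} [Group G]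

theorem neighborSet_nontrivial (x : {x : G // x ∉ center G}) :
    ((nonCommGraph G).neighborSet x).Nontrivial := by
  obtain ⟨y, hy⟩ : ∃ y : G, y * x ≠ x * y := by
    simpa [Subgroup.mem_center_iff] using x.2
  have hxy : (x : G) * y ≠ y * x := hy.symm
  refine ⟨⟨y, notMem_center_of_mul_ne hy⟩, hxy, ⟨x * y, notMem_center_of_mul_ne (b := x) ?_⟩,
    ?_, ?_⟩
  · exact fun h => hxy (by simpa [mul_assoc] using h.symm)
  · exact fun h => hxy (by simpa [mul_assoc] using h)
  · intro h
    have hx : (x : G) = 1 := right_eq_mul.1 (congrArg Subtype.val h)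
    exact x.2 (hx ▸ one_mem _)

variable (G)

def dartEquiv :
    (nonCommGraph G).Dart ≃ {p : G × G // ¬ Commute p.1 p.2} where
  toFun d := ⟨(d.fst, d.snd), d.adj⟩
  invFun p := ⟨(⟨p.1.1, notMem_center_of_mul_ne p.2⟩,
    ⟨p.1.2, notMem_center_of_mul_ne fun h => p.2 h.symm⟩), p.2⟩

theorem card_dart_add_card_conjClasses_mul [Finite G] :
    Nat.card (nonCommGraph G).Dart + Nat.card (ConjClasses G) * Nat.card G
      = Nat.card G * Nat.card G := by
  classical
  rw [Nat.card_congr (dartEquiv G), ← card_comm_eq_card_conjClasses_mul_card,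
    ← Nat.card_prod, add_comm, ← Nat.card_sum]
  exact Nat.card_congr (Equiv.sumCompl _)

end nonCommGraph

theorem conjClasses_ge_of_nonCommGraph_genus_le_one_general (G : Type*) [Group G] [Fintype G]
    (hg : genus (nonCommGraph G) ≤ 1) :
    Nat.card G ≤ Nat.card (ConjClasses G) + 5 := by
  have hE := SimpleGraph.card_edgeSet_le_three_mul_card_of_genus_le_one
    nonCommGraph.neighborSet_nontrivial hg
  have hpairs := nonCommGraph.card_dart_add_card_conjClasses_mul G
  rw [SimpleGraph.card_dart_eq_two_mul_card_edgeSet] at hpairs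
  have hV : Nat.card {x : G // x ∉ Subgroup.center G} < Nat.card G :=
    Finite.card_subtype_lt (x := 1) (not_not_intro (Subgroup.one_mem _))
  have hlt : Nat.card G * Nat.card G < (Nat.card (ConjClasses G) + 6) * Nat.card G := by
    linarith
  have := Nat.lt_of_mul_lt_mul_right hlt
  omega

/-- If the non-commuting graph of a finite non-abelian group `G` has genus at most `1`,
then `k(G) ≥ |G| - 5`, where `k(G)` is the number of conjugacy classes of `G`. -/
theorem conjClasses_ge_of_nonCommGraph_genus_le_one (G : Type*) [Group G] [Fintype G]
    (hna : ¬ ∀ a b : G, a * b = b * a)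
    (hg : genus (nonCommGraph G) ≤ 1) :
    Nat.card G ≤ Nat.card (ConjClasses G) + 5 :=
  conjClasses_ge_of_nonCommGraph_genus_le_one_general G hg
end

section
/- Let G be a finite non-abelian group, x ∈ G \ Z(G), y ∈ G \ C_G(x), and let X be the set of generators of the cyclic group ⟨x⟩. Then in the non-commuting graph of G, the subgraph induced by X ∪ ⟨x⟩y contains a complete bipartite graph K_{φ(|x|), |x|}, where φ is the Euler totient function. -/
open SimpleGraph

/-- Let `G` be a finite non-abelian group, `x ∉ Z(G)`, `y ∉ C_G(x)` and `X` the set of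
generators of `⟨x⟩`.  Then the subgraph of the non-commuting graph induced by
`X ∪ ⟨x⟩y` contains a complete bipartite graph `K_{φ(|x|), |x|}`. -/
theorem nonCommGraph_contains_bipartite (G : Type*) [Group G] [Finite G]
    (x y : G) (hx : x ∉ Subgroup.center G) (hy : y ∉ Subgroup.centralizer {x}) :
    ∃ A B : Finset G,
      A.card = Nat.totient (orderOf x) ∧ B.card = orderOf x ∧
      (↑A ⊆ {g : G | g ∈ Subgroup.zpowers x ∧ Subgroup.zpowers g = Subgroup.zpowers x}) ∧
      (↑B ⊆ {g : G | ∃ z ∈ Subgroup.zpowers x, g = z * y}) ∧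
      (∀ a ∈ A, a ∉ Subgroup.center G) ∧ (∀ b ∈ B, b ∉ Subgroup.center G) ∧
      ∀ a ∈ A, ∀ b ∈ B, a * b ≠ b * a := by
  classical
  haveI : Fintype G := Fintype.ofFinite G
  have hxy : x * y ≠ y * x := by
    intro h
    exact hy (Subgroup.mem_centralizer_iff.2 (by simpa using h))
  set H := Subgroup.zpowers x with hH
  have hcard : Fintype.card H = orderOf x := by
    rw [← Nat.card_eq_fintype_card]; exact Nat.card_zpowers x
  have hcyc : IsCyclic H := ⟨⟨⟨x, Subgroup.mem_zpowers x⟩, fun a => by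
    obtain ⟨a, ha⟩ := a
    obtain ⟨k, hk⟩ := ha
    exact ⟨k, Subtype.ext (by simpa using hk)⟩⟩⟩
  let A' : Finset H := Finset.univ.filter (fun a => orderOf a = Fintype.card H)
  have hA'card : A'.card = Nat.totient (orderOf x) := by
    rw [← hcard]
    have h := IsCyclic.card_orderOf_eq_totient (α := H) (d := Fintype.card H) dvd_rfl
    convert h using 2
  let A : Finset G := A'.image Subtype.val
  have hAcard : A.card = Nat.totient (orderOf x) := by
    rw [Finset.card_image_of_injective _ Subtype.val_injective, hA'card]
  have hAmem : ∀ a ∈ A, a ∈ H ∧ Subgroup.zpowers a = H := by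
    intro a ha
    obtain ⟨a', ha', rfl⟩ := Finset.mem_image.1 ha
    refine ⟨a'.2, ?_⟩
    have hord : orderOf (a' : G) = orderOf x := by
      rw [orderOf_submonoid a', (Finset.mem_filter.1 ha').2, hcard]
    have hle : Subgroup.zpowers (a' : G) ≤ H := by
      rw [Subgroup.zpowers_le]; exact a'.2
    refine Subgroup.eq_of_le_of_card_ge hle ?_
    rw [Nat.card_zpowers, Nat.card_zpowers, hord]
  let B : Finset G := (H : Set G).toFinset.image (fun z => z * y)
  have hBcard : B.card = orderOf x := by
    rw [Finset.card_image_of_injective _ (mul_left_injective y), Set.toFinset_card,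
      ← Nat.card_eq_fintype_card, SetLike.coe_sort_coe, Nat.card_zpowers]
  have hBmem : ∀ b ∈ B, ∃ z ∈ H, b = z * y := by
    intro b hb
    obtain ⟨z, hz, rfl⟩ := Finset.mem_image.1 hb
    exact ⟨z, by simpa using hz, rfl⟩
  have key : ∀ a ∈ A, ∀ b ∈ B, a * b ≠ b * a := by
    intro a ha b hb h
    obtain ⟨haH, hagen⟩ := hAmem a ha
    obtain ⟨z, hzH, rfl⟩ := hBmem b hb
    have hcomm : Commute a z := by
      obtain ⟨k, hk⟩ := haH; obtain ⟨l, hl⟩ := hzH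
      subst hk; subst hl; exact (Commute.refl x).zpow_zpow k l
    have hay : Commute a y := by
      have h2 : z * (a * y) = z * (y * a) :=
        calc z * (a * y) = (z * a) * y := (mul_assoc _ _ _).symm
          _ = (a * z) * y := by rw [hcomm.eq]
          _ = a * (z * y) := mul_assoc _ _ _
          _ = (z * y) * a := h
          _ = z * (y * a) := mul_assoc _ _ _
      exact mul_left_cancel h2
    have hxa : x ∈ Subgroup.zpowers a := hagen ▸ Subgroup.mem_zpowers x
    obtain ⟨k, hk⟩ := hxa
    exact hxy (by rw [← hk]; exact (hay.zpow_left k).eq)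
  refine ⟨A, B, hAcard, hBcard, ?_, ?_, ?_, ?_, key⟩
  · intro a ha
    exact hAmem a ha
  · intro b hb
    obtain ⟨z, hz, rfl⟩ := hBmem b hb
    exact ⟨z, hz, rfl⟩
  · intro a ha hc
    have hyB : (1 : G) * y ∈ B := Finset.mem_image.2 ⟨1, by simp [H.one_mem], rfl⟩
    exact key a ha (1 * y) hyB ((Subgroup.mem_center_iff.1 hc (1 * y)).symm)
  · intro b hb hc
    obtain ⟨z, hzH, rfl⟩ := hBmem b hb
    have hcomm : Commute x z := by
      obtain ⟨l, hl⟩ := hzH; subst hl; exact (Commute.refl x).zpow_right l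
    have h2 : x * (z * y) = (z * y) * x := Subgroup.mem_center_iff.1 hc x
    rw [← mul_assoc, hcomm.eq, mul_assoc, mul_assoc] at h2
    exact hxy (mul_left_cancel h2)
end

section
/- Let G be a finite group with trivial center whose element orders all lie in {1, 2, 3} and such that a Sylow 2-subgroup P of G is abelian. If G contains an element y of order 3, then the non-commuting graph of G contains a complete bipartite subgraph K_{|P|−1, |P|}, and hence if this graph is projective (crosscap 1) then |P| ≤ 4. -/
open SimpleGraph

/-- An embedding scheme: a rotation system together with an edge signature,
encoding an embedding in a possibly non-orientable surface. -/
structure EmbeddingScheme {V : Type*} (Γ : SimpleGraph V) extends RotationSystem Γ where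
  sign : Sym2 V → Bool

/-- The face-tracing step of an embedding scheme, acting on darts with a side indicator. -/
def EmbeddingScheme.faceStep {V : Type*} {Γ : SimpleGraph V} (S : EmbeddingScheme Γ) :
    Γ.Dart × Bool → Γ.Dart × Bool :=
  fun p =>
    let t := xor p.2 (S.sign p.1.edge)
    (if t then S.rot.symm p.1.symm else S.rot p.1.symm, t)

/-- The number of faces of an embedding scheme: half the number of orbits of the
face-tracing step, plus one face for each isolated vertex. -/
noncomputable def EmbeddingScheme.numFaces {V : Type*} {Γ : SimpleGraph V}
    (S : EmbeddingScheme Γ) : ℕ :=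
  Nat.card (Quotient (Relation.EqvGen.setoid
      (fun a b : Γ.Dart × Bool => S.faceStep a = b))) / 2
    + Nat.card {v : V // ∀ w, ¬ Γ.Adj v w}

/-- An embedding scheme is orientable if its signature is switching-equivalent to the
trivial one. -/
def EmbeddingScheme.Orientable {V : Type*} {Γ : SimpleGraph V}
    (S : EmbeddingScheme Γ) : Prop :=
  ∃ s : V → Bool, ∀ d : Γ.Dart, S.sign d.edge = xor (s d.toProd.1) (s d.toProd.2)

/-- The crosscap number (non-orientable genus) of a graph: the least `k` such that some
non-orientable embedding scheme satisfies the Euler formula bound `E + 2c ≤ V + F + k`. -/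
noncomputable def crosscap {V : Type*} (Γ : SimpleGraph V) : ℕ :=
  sInf {k : ℕ | ∃ S : EmbeddingScheme Γ, ¬ S.Orientable ∧
    (Nat.card Γ.edgeSet : ℤ) + 2 * Nat.card Γ.ConnectedComponent
      ≤ Nat.card V + S.numFaces + k}

/-!
A nontrivial element `a` of the abelian Sylow `2`-subgroup `P` cannot commute with an element
`p * y` of the coset `P y`: it commutes with `p`, hence it would commute with `y`, and then `a * y`
would have order `3 · orderOf a > 3`.

For the bound, the vertices of the non-commuting graph are the `|G| - 1` nontrivial elements, and
each has degree at least `|G| / 2` because its centralizer is a proper subgroup. In an embedding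
with `k` crosscaps every face has length at least three, so Euler's formula gives
`E ≤ 3 (V + k - 2)`; for `k = 1` this reads `|G| (|G| - 1) / 4 ≤ 3 |G| - 6`, which fails once
`|G| ≥ 24`. And `|P| > 4` forces `8 ∣ |G|`, while `3 ∣ |G|`.
-/

namespace RotationSystem

variable {V : Type*} {Γ : SimpleGraph V} (R : RotationSystem Γ)

lemma fst_rot_symm (d : Γ.Dart) : (R.rot.symm d).fst = d.fst := by
  simpa using (R.tail_eq (R.rot.symm d)).symm

lemma eq_of_rot_eq_self {d : Γ.Dart} (hd : R.rot d = d) {e : Γ.Dart} (he : d.fst = e.fst) :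
    d = e := by
  obtain ⟨k, hk⟩ := R.cyclic d e he
  rwa [Equiv.Perm.pow_apply_eq_self_of_apply_eq_self hd] at hk

end RotationSystem

namespace EmbeddingScheme

variable {V : Type*} {Γ : SimpleGraph V} (S : EmbeddingScheme Γ)

lemma fst_faceStep (p : Γ.Dart × Bool) : (S.faceStep p).1.fst = p.1.snd := by
  simp only [faceStep]
  split
  · exact S.fst_rot_symm _
  · exact S.tail_eq _

lemma faceStep_ne (p : Γ.Dart × Bool) : S.faceStep p ≠ p := fun h =>
  p.1.fst_ne_snd (by simpa [h] using S.fst_faceStep p)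

/-- A face of length two would consist of a dart `d` and its reverse, which forces the rotation
to fix `d.symm`; this is impossible at a vertex of degree at least two. -/
lemma faceStep_faceStep_ne (hdeg : ∀ d : Γ.Dart, ∃ e : Γ.Dart, d.fst = e.fst ∧ d ≠ e)
    (p : Γ.Dart × Bool) : S.faceStep (S.faceStep p) ≠ p := by
  intro h
  have hfst : (S.faceStep p).1.fst = p.1.snd := S.fst_faceStep p
  have hsnd : (S.faceStep p).1.snd = p.1.fst := by
    simpa [h] using (S.fst_faceStep (S.faceStep p)).symm
  have hrev : (S.faceStep p).1 = p.1.symm := by ext <;> simp [hfst, hsnd]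
  have hfix : S.rot p.1.symm = p.1.symm := by
    simp only [faceStep] at hrev
    split at hrev
    · simpa using congrArg S.rot hrev.symm
    · exact hrev
  obtain ⟨e, he, hne⟩ := hdeg p.1.symm
  exact hne (S.eq_of_rot_eq_self hfix he)

end EmbeddingScheme

/-- Each class contains the three distinct points `a`, `f a`, `f (f a)`. -/
lemma three_mul_card_quotient_le {α : Type*} [Finite α] (f : α → α) (h1 : ∀ a, f a ≠ a)
    (h2 : ∀ a, f (f a) ≠ a) :
    3 * Nat.card (Quotient (Relation.EqvGen.setoid fun a b : α => f a = b)) ≤ Nat.card α := by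
  set s := Relation.EqvGen.setoid fun a b : α => f a = b
  have hmk : ∀ (n : ℕ) (a : α), Quotient.mk s (f^[n] a) = Quotient.mk s a := by
    intro n
    induction n with
    | zero => intro a; rfl
    | succ n ih =>
      intro a
      rw [Function.iterate_succ_apply', ← ih a]
      exact Quotient.sound (Relation.EqvGen.symm _ _ (Relation.EqvGen.rel _ _ rfl))
  let g : Quotient s × Fin 3 → α := fun qi => f^[qi.2] qi.1.out
  have hg : Function.Injective g := by
    rintro ⟨q, i⟩ ⟨q', j⟩ hij
    obtain rfl : q = q' := by
      simpa [g, hmk] using congrArg (Quotient.mk s) hij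
    fin_cases i <;> fin_cases j <;> simp [g] at hij ⊢ <;>
      first
        | exact h1 _ hij | exact h1 _ hij.symm | exact h2 _ hij | exact h2 _ hij.symm
  simpa [Nat.card_prod, mul_comm] using Nat.card_le_card_of_injective g hg

section Euler

variable {V : Type*} [Finite V] {Γ : SimpleGraph V}

lemma EmbeddingScheme.three_mul_numFaces_le (S : EmbeddingScheme Γ)
    (hdeg : ∀ v, 2 ≤ Nat.card (Γ.neighborSet v)) :
    3 * S.numFaces ≤ 2 * Nat.card Γ.edgeSet := by
  classical
  have := Fintype.ofFinite V
  simp only [Nat.card_coe_set_eq] at hdeg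
  have hiso : Nat.card {v : V // ∀ w, ¬ Γ.Adj v w} = 0 := by
    refine Nat.card_eq_zero.mpr (.inl ⟨fun ⟨v, hv⟩ => ?_⟩)
    obtain ⟨w, hw⟩ := Set.nonempty_of_ncard_ne_zero (s := Γ.neighborSet v)
      (by have := hdeg v; omega)
    exact hv w hw
  have hdarts : ∀ d : Γ.Dart, ∃ e : Γ.Dart, d.fst = e.fst ∧ d ≠ e := by
    intro d
    obtain ⟨w, hw, hne⟩ := Set.exists_ne_of_one_lt_ncard (hdeg d.fst) d.snd
    exact ⟨⟨(d.fst, w), hw⟩, rfl, fun h => hne (congrArg (·.snd) h).symm⟩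
  have hcard : Nat.card (Γ.Dart × Bool) = 4 * Nat.card Γ.edgeSet := by
    rw [Nat.card_prod, Nat.card_eq_fintype_card, dart_card_eq_twice_card_edges,
      Nat.card_eq_fintype_card, Fintype.card_bool, Nat.card_eq_fintype_card, ← edgeFinset_card]
    ring
  have h3 := three_mul_card_quotient_le S.faceStep S.faceStep_ne (S.faceStep_faceStep_ne hdarts)
  rw [EmbeddingScheme.numFaces, hiso]
  omega

/-- The bound `E ≤ 3 (V - χ)` for a surface of Euler characteristic `χ = 2 - k`; it holds because
every face has length at least three once all degrees are at least two. -/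
theorem card_edgeSet_add_six_le_of_crosscap_pos [Nonempty V]
    (hdeg : ∀ v, 2 ≤ Nat.card (Γ.neighborSet v)) (hk : 0 < crosscap Γ) :
    Nat.card Γ.edgeSet + 6 ≤ 3 * Nat.card V + 3 * crosscap Γ := by
  obtain ⟨S, -, hS⟩ : ∃ S : EmbeddingScheme Γ, ¬ S.Orientable ∧
      (Nat.card Γ.edgeSet : ℤ) + 2 * Nat.card Γ.ConnectedComponent
        ≤ Nat.card V + S.numFaces + crosscap Γ :=
    Nat.sInf_mem (Nat.nonempty_of_pos_sInf hk)
  have hF := S.three_mul_numFaces_le hdeg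
  have : Finite Γ.ConnectedComponent := Quot.finite _
  have hc : 0 < Nat.card Γ.ConnectedComponent := Nat.card_pos
  omega

end Euler

section NonCommuting

variable {G : Type*} [Group G] [Finite G]

lemma not_commute_of_coprime_orderOf (hord : ∀ g : G, orderOf g ≤ 3) {a y : G} (ha : a ≠ 1)
    (hcop : (orderOf a).Coprime 3) (hy : orderOf y = 3) : ¬ Commute a y := by
  intro h
  have hmul := h.orderOf_mul_eq_mul_orderOf_of_coprime (hy ▸ hcop)
  have ha1 : orderOf a ≠ 1 := mt orderOf_eq_one_iff.mp ha
  have := hord (a * y)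
  rw [hmul, hy] at this
  have := orderOf_pos a
  omega

/-- Writing `y = p⁻¹ * (p * y)`, an element of `P` commuting with `p * y` would commute with `y`. -/
lemma not_commute_mul_of_mem_sylow (hord : ∀ g : G, orderOf g ≤ 3) (P : Sylow 2 G) {a p y : G}
    (ha : a ∈ (P : Subgroup G)) (ha1 : a ≠ 1) (hap : Commute a p) (hy : orderOf y = 3) :
    ¬ Commute a (p * y) := by
  intro h
  have hcop : (orderOf a).Coprime 3 := by
    simpa using P.isPGroup'.orderOf_coprime (by norm_num) ⟨a, ha⟩
  exact not_commute_of_coprime_orderOf hord ha1 hcop hy (by simpa using hap.inv_right.mul_right h)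

lemma exists_complete_bipartite_not_commute (hord : ∀ g : G, orderOf g ≤ 3) (P : Sylow 2 G)
    (hP : ∀ a ∈ (P : Subgroup G), ∀ b ∈ (P : Subgroup G), a * b = b * a) {y : G}
    (hy : orderOf y = 3) :
    ∃ A B : Finset G,
      A.card = Nat.card (P : Subgroup G) - 1 ∧ B.card = Nat.card (P : Subgroup G) ∧
      (↑A ⊆ ((P : Subgroup G) : Set G) \ {1}) ∧
      (↑B ⊆ {g : G | ∃ p ∈ (P : Subgroup G), g = p * y}) ∧
      ∀ a ∈ A, ∀ b ∈ B, a * b ≠ b * a := by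
  classical
  have := Fintype.ofFinite G
  set S := ((P : Subgroup G) : Set G).toFinset
  have hS : S.card = Nat.card (P : Subgroup G) := by
    rw [Set.toFinset_card, Nat.card_eq_fintype_card]; rfl
  refine ⟨S.erase 1, S.image (· * y), ?_, ?_, ?_, ?_, ?_⟩
  · rw [Finset.card_erase_of_mem (by simp [S]), hS]
  · rw [Finset.card_image_of_injective _ (mul_left_injective y), hS]
  · intro a
    simp [S]
  · rintro _ hb
    obtain ⟨p, hp, rfl⟩ := Finset.mem_image.mp hb
    exact ⟨p, Set.mem_toFinset.mp hp, rfl⟩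
  · intro a ha b hb
    obtain ⟨ha1, ha⟩ := by simpa [S] using ha
    obtain ⟨p, hp, rfl⟩ := Finset.mem_image.mp hb
    exact not_commute_mul_of_mem_sylow hord P ha ha1 (hP a ha p (Set.mem_toFinset.mp hp)) hy

end NonCommuting

section NonCommGraph

variable {G : Type*} [Group G] [Finite G]

lemma card_neighborSet_nonCommGraph_add_card_centralizer (v : {x : G // x ∉ Subgroup.center G}) :
    Nat.card ((nonCommGraph G).neighborSet v) + Nat.card (Subgroup.centralizer {(v : G)}) =
      Nat.card G := by
  have e : (nonCommGraph G).neighborSet v ≃ ((Subgroup.centralizer {(v : G)} : Set G)ᶜ : Set G) :=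
    (Equiv.subtypeSubtypeEquivSubtype (p := (· ∉ Subgroup.center G))
      (q := fun g => (v : G) * g ≠ g * v) fun h hc => h (Subgroup.mem_center_iff.mp hc v)).trans
      (Equiv.subtypeEquivRight (q := (· ∈ (Subgroup.centralizer {(v : G)} : Set G)ᶜ)) fun g => by
        simp [Subgroup.mem_centralizer_singleton_iff, eq_comm])
  rw [Nat.card_congr e, Nat.card_coe_set_eq, add_comm, ← Set.ncard_add_ncard_compl
    (Subgroup.centralizer {(v : G)} : Set G), ← Nat.card_coe_set_eq]
  rfl

lemma card_le_two_mul_card_neighborSet_nonCommGraph (v : {x : G // x ∉ Subgroup.center G}) :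
    Nat.card G ≤ 2 * Nat.card ((nonCommGraph G).neighborSet v) := by
  have hC : Subgroup.centralizer {(v : G)} ≠ ⊤ := by
    simpa [Subgroup.centralizer_eq_top_iff_subset] using v.2
  have hindex := Subgroup.one_lt_index_of_ne_top hC
  have hmul := (Subgroup.centralizer {(v : G)}).card_mul_index
  have hdeg := card_neighborSet_nonCommGraph_add_card_centralizer v
  nlinarith

lemma card_mul_card_le_four_mul_card_edgeSet_nonCommGraph :
    Nat.card {x : G // x ∉ Subgroup.center G} * Nat.card G ≤
      4 * Nat.card (nonCommGraph G).edgeSet := by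
  classical
  have := Fintype.ofFinite G
  calc Nat.card {x : G // x ∉ Subgroup.center G} * Nat.card G
      = ∑ _v : {x : G // x ∉ Subgroup.center G}, Nat.card G := by
        simp [Nat.card_eq_fintype_card]
    _ ≤ ∑ v, 2 * (nonCommGraph G).degree v := by
        gcongr with v
        rw [← card_neighborSet_eq_degree, ← Nat.card_eq_fintype_card]
        exact card_le_two_mul_card_neighborSet_nonCommGraph v
    _ = 4 * Nat.card (nonCommGraph G).edgeSet := by
        rw [← Finset.mul_sum, sum_degrees_eq_twice_card_edges, Nat.card_eq_fintype_card,
          ← edgeFinset_card]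
        ring

end NonCommGraph

lemma eight_dvd_card_of_four_lt_card_sylow {G : Type*} [Group G] [Finite G] (P : Sylow 2 G)
    (hP : 4 < Nat.card (P : Subgroup G)) : 8 ∣ Nat.card G := by
  obtain ⟨k, hk⟩ := IsPGroup.iff_card.mp P.isPGroup'
  have hk3 : 3 ≤ k := by
    rw [hk] at hP
    by_contra! hk3
    interval_cases k <;> omega
  exact (hk ▸ pow_dvd_pow 2 hk3).trans (P : Subgroup G).card_subgroup_dvd_card

/-- Let `G` be a finite group with trivial center whose element orders lie in
`{1, 2, 3}`, with an abelian Sylow `2`-subgroup `P` and an element `y` of order `3`.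
Then the non-commuting graph of `G` contains a complete bipartite subgraph
`K_{|P|-1, |P|}`; hence if this graph is projective (crosscap `1`) then `|P| ≤ 4`. -/
theorem sylow_two_bound_of_projective (G : Type*) [Group G] [Finite G]
    (hZ : Subgroup.center G = ⊥)
    (hord : ∀ g : G, orderOf g = 1 ∨ orderOf g = 2 ∨ orderOf g = 3)
    (P : Sylow 2 G)
    (hP : ∀ a ∈ (P : Subgroup G), ∀ b ∈ (P : Subgroup G), a * b = b * a)
    (y : G) (hy : orderOf y = 3) :
    (∃ A B : Finset G,
        A.card = Nat.card (P : Subgroup G) - 1 ∧ B.card = Nat.card (P : Subgroup G) ∧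
        (↑A ⊆ ((P : Subgroup G) : Set G) \ {1}) ∧
        (↑B ⊆ {g : G | ∃ p ∈ (P : Subgroup G), g = p * y}) ∧
        ∀ a ∈ A, ∀ b ∈ B, a * b ≠ b * a) ∧
      (crosscap (nonCommGraph G) = 1 → Nat.card (P : Subgroup G) ≤ 4) := by
  have hord3 (g : G) : orderOf g ≤ 3 := by rcases hord g with h | h | h <;> omega
  refine ⟨exists_complete_bipartite_not_commute hord3 P hP hy, fun hcross => ?_⟩
  by_contra! hP4
  have hN : 24 ≤ Nat.card G := Nat.le_of_dvd Nat.card_pos <|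
    Nat.Coprime.mul_dvd_of_dvd_of_dvd (by norm_num) (eight_dvd_card_of_four_lt_card_sylow P hP4)
      (hy ▸ orderOf_dvd_natCard y)
  have hV : Nat.card {x : G // x ∉ Subgroup.center G} + 1 = Nat.card G := by
    have := Set.ncard_compl_add_ncard (Subgroup.center G : Set G)
    rw [← Nat.card_coe_set_eq, hZ, Subgroup.coe_bot, Set.ncard_singleton] at this
    simp only [hZ, Subgroup.mem_bot]
    exact this
  have : Nonempty {x : G // x ∉ Subgroup.center G} :=
    ⟨⟨y, by rw [hZ, Subgroup.mem_bot]; rintro rfl; simp at hy⟩⟩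
  have hdeg (v : {x : G // x ∉ Subgroup.center G}) :
      2 ≤ Nat.card ((nonCommGraph G).neighborSet v) := by
    have := card_le_two_mul_card_neighborSet_nonCommGraph v
    omega
  have hEuler := card_edgeSet_add_six_le_of_crosscap_pos hdeg (hcross ▸ one_pos)
  have hE := card_mul_card_le_four_mul_card_edgeSet_nonCommGraph (G := G)
  rw [hcross] at hEuler
  nlinarith
end
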